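/- Let H = (H0, H1) be a consistent partial condition over a nonempty finite set T. There exists a Büchi condition F ⊆ T that is consistent with H if and only if there is no P ∈ H0 with P ⊆ ⋃H1. Moreover, if there is no P ∈ H0 with P ⊆ ⋃H1, then the specific Büchi condition F = T ∖ ⋃H1 is consistent with H. -/
import Mathlib

/-- Existence of a Büchi condition consistent with a partial
condition `(H0, H1)` over a nonempty finite set `T` iff no `P ∈ H0` is covered
by `⋃ H1`; moreover in that case `T \ ⋃ H1` is such a Büchi condition. -/
theorem buchi_consistency {T : Type*} [Fintype T] [Nonempty T]
    (H0 H1 : Set (Set T)) (hcons : H0 ∩ H1 = ∅) :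
    ((∃ F : Set T, (∀ X ∈ H0, (X ∩ F).Nonempty) ∧ ∀ X ∈ H1, ¬(X ∩ F).Nonempty) ↔
      ¬∃ P ∈ H0, P ⊆ ⋃₀ H1) ∧
    ((¬∃ P ∈ H0, P ⊆ ⋃₀ H1) →
      ((∀ X ∈ H0, (X ∩ (Set.univ \ ⋃₀ H1)).Nonempty) ∧
        ∀ X ∈ H1, ¬(X ∩ (Set.univ \ ⋃₀ H1)).Nonempty)) := by
  have second : (¬∃ P ∈ H0, P ⊆ ⋃₀ H1) →
      ((∀ X ∈ H0, (X ∩ (Set.univ \ ⋃₀ H1)).Nonempty) ∧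
        ∀ X ∈ H1, ¬(X ∩ (Set.univ \ ⋃₀ H1)).Nonempty) := by
    intro h
    push_neg at h
    constructor
    · intro X hX
      obtain ⟨x, hx, hx'⟩ := Set.not_subset.1 (h X hX)
      exact ⟨x, hx, trivial, hx'⟩
    · rintro X hX ⟨x, hx, -, hx'⟩
      exact hx' ⟨X, hX, hx⟩
  refine ⟨⟨?_, fun h => ⟨_, second h⟩⟩, second⟩
  rintro ⟨F, h0, h1⟩ ⟨P, hP, hsub⟩
  obtain ⟨x, hxP, hxF⟩ := h0 P hP
  obtain ⟨X, hX, hxX⟩ := hsub hxP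
  exact h1 X hX ⟨x, hxX, hxF⟩
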